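/- Let ψ be a nontrivial additive character of F_q with values in ℂ, let d ≥ 1 be an integer, and let b ∈ F_q with b ≠ 0. Then Σ_{x ∈ GL_d(F_q), det(x) = b} ψ(tr(x)) = q^{d(d−1)/2} · K_{F_q^d}(b), where K_{F_q^d}(b) = Σ_{(y_1,…,y_d) ∈ (F_q*)^d, y_1 ⋯ y_d = b} ψ(y_1 + ⋯ + y_d) is the hyper-Kloosterman sum. -/

import Mathlib

/-!
Write `S_n(b)` for the sum of `ψ (trace g)` over `n × n` matrices of determinant `b`. Fibre the
matrices of size `n + 1` over their last column. If this column has a nonzero entry `v j` off the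
last row, adding multiples of it to column `j` preserves the determinant and the column but shifts
the trace by every element of `F`, so the fibre contributes nothing. The remaining matrices are
block triangular `[[A, 0], [C, d]]` with `det A * d = b` and trace `trace A + d`, and the `q ^ n`
free entries of `C` give `S_{n+1}(b) = q ^ n * ∑_{d ≠ 0} ψ d * S_n(b / d)`. Apart from the factor
`q ^ n` this is the recursion satisfied by the hyper-Kloosterman sums, and the exponents add up to
`n.choose 2`.
-/

open Finset Matrix

theorem AddChar.sum_eq_zero_of_perm_shift {A R α : Type*} [AddGroup A] [CommRing R] [IsDomain R]
    (ψ : AddChar A R) {s : Finset α} (e : α ≃ α) (he : ∀ x, x ∈ s ↔ e x ∈ s) (f : α → A)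
    {c : A} (hf : ∀ x ∈ s, f (e x) = f x + c) (hc : ψ c ≠ 1) :
    ∑ x ∈ s, ψ (f x) = 0 := by
  have h : ψ c * ∑ x ∈ s, ψ (f x) = ∑ x ∈ s, ψ (f x) :=
    calc ψ c * ∑ x ∈ s, ψ (f x) = ∑ x ∈ s, ψ (f (e x)) := by
          rw [mul_sum]
          exact sum_congr rfl fun x hx => by rw [hf x hx, AddChar.map_add_eq_mul, mul_comm]
      _ = ∑ x ∈ s, ψ (f x) := sum_equiv e he fun _ _ => rfl
  exact (mul_left_eq_self₀.mp h).resolve_left hc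

namespace Matrix

variable {l m n o α : Type*}

def fromBlocksEquiv : (Matrix n l α × Matrix n m α) × (Matrix o l α × Matrix o m α) ≃
    Matrix (n ⊕ o) (l ⊕ m) α where
  toFun M := fromBlocks M.1.1 M.1.2 M.2.1 M.2.2
  invFun M := ((M.toBlocks₁₁, M.toBlocks₁₂), (M.toBlocks₂₁, M.toBlocks₂₂))
  left_inv M := by simp
  right_inv := fromBlocks_toBlocks

theorem sum_fromBlocks_zero₁₂ [Fintype l] [Fintype m] [Fintype n] [Fintype o]
    [DecidableEq l] [DecidableEq m] [DecidableEq n] [DecidableEq o]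
    [Zero α] [Fintype α] [DecidableEq α]
    {M : Type*} [AddCommMonoid M] (f : Matrix (n ⊕ o) (l ⊕ m) α → M) :
    ∑ g with g.toBlocks₁₂ = 0, f g = ∑ A, ∑ C, ∑ D, f (fromBlocks A 0 C D) := by
  rw [sum_filter, ← fromBlocksEquiv.sum_comp]
  simp only [fromBlocksEquiv, Equiv.coe_fn_mk, toBlocks_fromBlocks₁₂, Fintype.sum_prod_type]
  refine sum_congr rfl fun A _ => ?_
  rw [sum_eq_single 0 (fun B _ hB => by simp [hB]) (by simp)]
  simp

theorem trace_reindex [Fintype m] [Fintype n] [AddCommMonoid α] (e : m ≃ n) (A : Matrix m m α) :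
    (reindex e e A).trace = A.trace := by
  simp only [trace, Matrix.diag, reindex_apply, submatrix_apply]
  exact e.symm.sum_comp fun i => A i i

end Matrix

theorem Fintype.sum_units_eq_sum_of_map_zero {G M : Type*} [GroupWithZero G] [Fintype G]
    [Fintype Gˣ] [AddCommMonoid M] {f : G → M} (hf : f 0 = 0) :
    ∑ u : Gˣ, f u = ∑ x, f x := by
  calc ∑ u : Gˣ, f u = ∑ x ∈ univ.map ⟨Units.val, Units.val_injective⟩, f x :=
        (Finset.sum_map univ ⟨Units.val, Units.val_injective⟩ f).symm
    _ = ∑ x, f x := by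
        refine Finset.sum_subset (subset_univ _) fun x _ hx => ?_
        obtain rfl : x = 0 := by
          by_contra h
          exact hx (mem_map_of_mem _ (mem_univ (Units.mk0 x h)))
        exact hf

section TraceSums

variable {F R : Type*} [Field F] [Fintype F] [DecidableEq F] [CommRing R] (ψ : AddChar F R)
variable (ι : Type*) [Fintype ι] [DecidableEq ι]

def matrixTraceSum (b : F) : R :=
  ∑ g : Matrix ι ι F with g.det = b, ψ g.trace

def hyperKloostermanSum (b : F) : R :=
  ∑ y : ι → Fˣ with ∏ j, (y j : F) = b, ψ (∑ j, (y j : F))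

variable {ι} {κ : Type*} [Fintype κ] [DecidableEq κ]

theorem matrixTraceSum_congr (e : ι ≃ κ) (b : F) :
    matrixTraceSum ψ κ b = matrixTraceSum ψ ι b :=
  (sum_equiv (reindex e e) (by simp) fun g _ => by rw [trace_reindex]).symm

theorem hyperKloostermanSum_congr (e : ι ≃ κ) (b : F) :
    hyperKloostermanSum ψ κ b = hyperKloostermanSum ψ ι b := by
  refine (sum_equiv (e.arrowCongr (Equiv.refl Fˣ)) (fun y => ?_) fun y _ => ?_).symm
  · simp [e.symm.prod_comp fun j => (y j : F)]
  · simp [e.symm.sum_comp fun j => (y j : F)]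

theorem sum_GL_det_eq_sum_filter_det {M : Type*} [AddCommMonoid M] {b : F} (hb : b ≠ 0)
    (f : Matrix ι ι F → M) :
    ∑ x : {x : GL ι F // (x : Matrix ι ι F).det = b}, f x.1 =
      ∑ g : Matrix ι ι F with g.det = b, f g := by
  rw [sum_subtype _ (fun _ => mem_filter_univ _) f]
  refine Fintype.sum_bijective (fun x => ⟨x.1, x.2⟩) ⟨fun x y h => ?_, fun g => ?_⟩ _ _ fun _ => rfl
  · exact Subtype.ext (Units.ext (congrArg Subtype.val h))
  · have hg : IsUnit g.1 := (isUnit_iff_isUnit_det _).mpr (by rw [g.2]; exact hb.isUnit)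
    exact ⟨⟨hg.unit, g.2⟩, rfl⟩

theorem hyperKloostermanSum_sum_of_unique [Unique κ] (b : F) :
    hyperKloostermanSum ψ (ι ⊕ κ) b = ∑ u : Fˣ, ψ u * hyperKloostermanSum ψ ι (u⁻¹ * b) := by
  rw [hyperKloostermanSum, sum_filter, ← (Equiv.sumArrowEquivProdArrow ι κ Fˣ).symm.sum_comp,
    Fintype.sum_prod_type, sum_comm, ← (Equiv.funUnique κ Fˣ).symm.sum_comp]
  refine sum_congr rfl fun u _ => ?_
  rw [hyperKloostermanSum, mul_sum, sum_filter]
  refine sum_congr rfl fun y _ => ?_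
  simp only [Fintype.prod_sum_type, Fintype.sum_sum_type,
    Equiv.sumArrowEquivProdArrow_symm_apply_inl,
    Equiv.sumArrowEquivProdArrow_symm_apply_inr, Fintype.prod_unique, Fintype.sum_unique,
    Equiv.funUnique_symm_apply, uniqueElim_default, Units.eq_inv_mul_iff_mul_eq, mul_comm _ (u : F)]
  split_ifs <;> simp [AddChar.map_add_eq_mul, mul_comm]

theorem sum_trace_filter_det_toBlocks₁₂_zero [Unique κ] {b : F} (hb : b ≠ 0) :
    ∑ g : Matrix (ι ⊕ κ) (ι ⊕ κ) F with g.toBlocks₁₂ = 0 ∧ g.det = b, ψ g.trace =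
      (Fintype.card F : R) ^ Fintype.card ι * ∑ u : Fˣ, ψ u * matrixTraceSum ψ ι (u⁻¹ * b) := by
  calc _ = ∑ A : Matrix ι ι F, ∑ _C : Matrix κ ι F, ∑ d : F,
        if A.det * d = b then ψ (A.trace + d) else 0 := by
        rw [← filter_filter, sum_filter, sum_fromBlocks_zero₁₂]
        refine sum_congr rfl fun A _ => sum_congr rfl fun C _ => ?_
        rw [← uniqueEquiv.symm.sum_comp]
        simp [det_fromBlocks_zero₁₂, trace]
    _ = (Fintype.card F : R) ^ Fintype.card ι * ∑ d : F, ∑ A : Matrix ι ι F,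
        if A.det * d = b then ψ (A.trace + d) else 0 := by
        simp only [sum_const, card_univ, nsmul_eq_mul]
        have hcard : Fintype.card (Matrix κ ι F) = Fintype.card F ^ Fintype.card ι :=
          (Fintype.card_congr (Equiv.funUnique κ (ι → F))).trans Fintype.card_fun
        rw [← mul_sum, sum_comm, hcard, Nat.cast_pow]
    _ = _ := by
        rw [← Fintype.sum_units_eq_sum_of_map_zero (by simp [hb.symm])]
        refine congrArg _ (sum_congr rfl fun u _ => ?_)
        rw [matrixTraceSum, mul_sum, sum_filter]
        refine sum_congr rfl fun A _ => ?_
        simp only [mul_comm A.det, ← Units.eq_inv_mul_iff_mul_eq]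
        split_ifs <;> simp [AddChar.map_add_eq_mul, mul_comm]

variable [IsDomain R]

theorem sum_trace_filter_det_col_eq_zero (hψ : ψ ≠ 1) {i j : ι} (hij : i ≠ j) (b : F)
    {v : ι → F} (hv : v j ≠ 0) :
    ∑ g : Matrix ι ι F with g.det = b ∧ gᵀ i = v, ψ g.trace = 0 := by
  obtain ⟨c, hc⟩ := AddChar.ne_one_iff.mp hψ
  set t := c / v j
  -- `g * transvection i j t` is `g` with `t` times column `i` added to column `j`
  let e : Matrix ι ι F ≃ Matrix ι ι F :=
    { toFun g := g * transvection i j t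
      invFun g := g * transvection i j (-t)
      left_inv g := by simp [Matrix.mul_assoc, transvection_mul_transvection_same i j hij]
      right_inv g := by simp [Matrix.mul_assoc, transvection_mul_transvection_same i j hij] }
  have hcol (g : Matrix ι ι F) : (e g)ᵀ i = gᵀ i :=
    funext fun k => mul_transvection_apply_of_ne i j k i hij t g
  have hdet (g : Matrix ι ι F) : (e g).det = g.det := by
    simp [e, det_transvection_of_ne i j hij]
  have htrace (g : Matrix ι ι F) : (e g).trace = g.trace + t * g j i := by
    simp [e, transvection, Matrix.mul_add, trace_mul_single, mul_comm]
  refine AddChar.sum_eq_zero_of_perm_shift ψ e (fun g => by simp [hcol, hdet]) trace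
    (fun g hg => ?_) hc
  have hgj : g j i = v j := congrFun (mem_filter.mp hg).2.2 j
  rw [htrace, hgj, div_mul_cancel₀ c hv]

theorem matrixTraceSum_eq_sum_filter_col_offDiag_zero (hψ : ψ ≠ 1) (i : ι) (b : F) :
    matrixTraceSum ψ ι b =
      ∑ g : Matrix ι ι F with g.det = b ∧ ∀ k ≠ i, g k i = 0, ψ g.trace := by
  rw [matrixTraceSum, ← sum_filter_add_sum_filter_not _ (fun g => ∀ k ≠ i, g k i = 0),
    filter_filter, add_eq_left]
  have hfiber : ∀ v ∈ univ.filter (fun v : ι → F => ∃ k ≠ i, v k ≠ 0),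
      ∑ g ∈ univ.filter (fun g : Matrix ι ι F => g.det = b) with gᵀ i = v, ψ g.trace = 0 := by
    intro v hv
    obtain ⟨k, hki, hvk⟩ := by simpa using hv
    rw [filter_filter]
    exact sum_trace_filter_det_col_eq_zero ψ hψ (Ne.symm hki) b hvk
  rw [← sum_eq_zero hfiber, sum_fiberwise_eq_sum_filter]
  congr 1
  ext g
  simp

theorem matrixTraceSum_sum_of_unique (hψ : ψ ≠ 1) [Unique κ] {b : F} (hb : b ≠ 0) :
    matrixTraceSum ψ (ι ⊕ κ) b =
      (Fintype.card F : R) ^ Fintype.card ι * ∑ u : Fˣ, ψ u * matrixTraceSum ψ ι (u⁻¹ * b) := by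
  rw [matrixTraceSum_eq_sum_filter_col_offDiag_zero ψ hψ (Sum.inr default),
    ← sum_trace_filter_det_toBlocks₁₂_zero (κ := κ) ψ hb]
  congr 1
  ext g
  simp [← Matrix.ext_iff, toBlocks₁₂, Unique.forall_iff, and_comm]

theorem matrixTraceSum_eq_pow_mul_hyperKloostermanSum (hψ : ψ ≠ 1) {b : F} (hb : b ≠ 0) :
    matrixTraceSum ψ ι b =
      (Fintype.card F : R) ^ (Fintype.card ι).choose 2 * hyperKloostermanSum ψ ι b := by
  rw [matrixTraceSum_congr ψ (Fintype.equivFin ι).symm,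
    hyperKloostermanSum_congr ψ (Fintype.equivFin ι).symm]
  induction Fintype.card ι generalizing b with
  | zero =>
    simp only [matrixTraceSum, hyperKloostermanSum, det_fin_zero, trace_fin_zero, univ_eq_empty,
      prod_empty, sum_empty]
    have hcard : Fintype.card (Matrix (Fin 0) (Fin 0) F) = 1 :=
      Fintype.card_eq_one_iff.mpr ⟨1, fun _ => Matrix.ext fun i => i.elim0⟩
    by_cases h : (1 : F) = b <;> simp [h, hcard]
  | succ n ih =>
    rw [matrixTraceSum_congr ψ finSumFinEquiv, hyperKloostermanSum_congr ψ finSumFinEquiv,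
      matrixTraceSum_sum_of_unique ψ hψ hb, hyperKloostermanSum_sum_of_unique, mul_sum, mul_sum]
    refine sum_congr rfl fun u _ => ?_
    rw [ih (mul_ne_zero u⁻¹.ne_zero hb), Fintype.card_fin, Nat.choose_succ_succ',
      Nat.choose_one_right, pow_add]
    ring

end TraceSums

open Classical in
theorem stmt_15_general (q : ℕ) (F : Type) [Field F] [Fintype F] (hF : Fintype.card F = q)
    (ψ : AddChar F ℂ) (hψ : ∃ c, ψ c ≠ 1)
    (d : ℕ) (b : F) (hb : b ≠ 0) :
    (∑ x : {x : GL (Fin d) F // (x : Matrix (Fin d) (Fin d) F).det = b},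
        ψ (x.1 : Matrix (Fin d) (Fin d) F).trace)
      = (q : ℂ) ^ (d * (d - 1) / 2)
        * ∑ y : {y : Fin d → Fˣ // (∏ j, (y j : F)) = b}, ψ (∑ j, (y.1 j : F)) := by
  rw [sum_GL_det_eq_sum_filter_det hb fun g => ψ g.trace, ← Nat.choose_two_right, ← hF]
  convert matrixTraceSum_eq_pow_mul_hyperKloostermanSum (ι := Fin d) ψ
    (AddChar.ne_one_iff.mpr hψ) hb using 3
  · rfl
  · rw [Fintype.card_fin]
  · exact (sum_subtype _ (fun _ => mem_filter_univ _) fun y : Fin d → Fˣ => ψ (∑ j, (y j : F))).symm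

open Classical in
theorem stmt_15 (q : ℕ) (F : Type) [Field F] [Fintype F] (hF : Fintype.card F = q)
    (ψ : AddChar F ℂ) (hψ : ∃ c, ψ c ≠ 1)
    (d : ℕ) (hd : 1 ≤ d) (b : F) (hb : b ≠ 0) :
    (∑ x : {x : GL (Fin d) F // (x : Matrix (Fin d) (Fin d) F).det = b},
        ψ (x.1 : Matrix (Fin d) (Fin d) F).trace)
      = (q : ℂ) ^ (d * (d - 1) / 2)
        * ∑ y : {y : Fin d → Fˣ // (∏ j, (y j : F)) = b}, ψ (∑ j, (y.1 j : F)) :=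
  stmt_15_general q F hF ψ hψ d b hb
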